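/- arXiv:2512.22436 — 3 statements merged into one kernel-verified Lean document; each statement's English description precedes it below -/
import Mathlib

section
/- Let η = (η₁, η₂) ∈ ℝ² with η ≠ 0 and write r = |η|. Suppose u : ℝ → ℂ³ and p : ℝ → ℂ are infinitely differentiable on (0,∞) and satisfy, for all t > 0: uⱼ''''(t) − 2r² uⱼ''(t) + r⁴ uⱼ(t) + i ηⱼ p(t) = 0 for j = 1,2; u₃''''(t) − 2r² u₃''(t) + r⁴ u₃(t) + p'(t) = 0; and u₃'(t) + i η₁ u₁(t) + i η₂ u₂(t) = 0. Then p''(t) = r² p(t) for all t > 0. -/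
open Set

private lemma iDW_open {f : ℝ → ℂ} {s : Set ℝ} (n : ℕ) (hs : IsOpen s)
    {x : ℝ} (hx : x ∈ s) : iteratedDerivWithin n f s x = iteratedDeriv n f x := by
  rw [iteratedDerivWithin_eq_iteratedFDerivWithin, iteratedDeriv_eq_iteratedFDeriv,
    iteratedFDerivWithin_of_isOpen n hs hx]

private lemma diffAt_iD {f : ℝ → ℂ} (hf : ContDiffOn ℝ (⊤ : ℕ∞) f (Set.Ioi 0)) (n : ℕ)
    {t : ℝ} (ht : 0 < t) : DifferentiableAt ℝ (iteratedDeriv n f) t := by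
  have hS : IsOpen (Set.Ioi (0:ℝ)) := isOpen_Ioi
  have h1 : DifferentiableWithinAt ℝ (iteratedDerivWithin n f (Set.Ioi 0)) (Set.Ioi 0) t :=
    hf.differentiableOn_iteratedDerivWithin (by exact_mod_cast ENat.coe_lt_top n) hS.uniqueDiffOn t ht
  have h2 : DifferentiableAt ℝ (iteratedDerivWithin n f (Set.Ioi 0)) t :=
    h1.differentiableAt (hS.mem_nhds ht)
  refine h2.congr_of_eventuallyEq ?_
  filter_upwards [hS.mem_nhds ht] with x hx
  exact (iDW_open n hS hx).symm

/-- Let `η ∈ ℝ²` be nonzero, `r = |η|`, and suppose `u : ℝ → ℂ³`, `p : ℝ → ℂ` are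
infinitely differentiable on `(0,∞)` and satisfy, for all `t > 0`:
`uⱼ'''' − 2r²uⱼ'' + r⁴uⱼ + iηⱼ p = 0` for `j = 1,2`,
`u₃'''' − 2r²u₃'' + r⁴u₃ + p' = 0`, and `u₃' + iη₁u₁ + iη₂u₂ = 0`.
Then `p'' = r² p` on `(0,∞)` (indices 0-based). -/
theorem stmt15 (η : EuclideanSpace ℝ (Fin 2)) (hη : η ≠ 0)
    (u : ℝ → Fin 3 → ℂ) (p : ℝ → ℂ)
    (hu : ∀ i : Fin 3, ContDiffOn ℝ (⊤ : ℕ∞) (fun t => u t i) (Set.Ioi (0 : ℝ)))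
    (hp : ContDiffOn ℝ (⊤ : ℕ∞) p (Set.Ioi (0 : ℝ)))
    (heq0 : ∀ t : ℝ, 0 < t →
      iteratedDeriv 4 (fun s => u s 0) t
        - 2 * (‖η‖ : ℂ)^2 * iteratedDeriv 2 (fun s => u s 0) t
        + (‖η‖ : ℂ)^4 * u t 0 + Complex.I * (η 0 : ℂ) * p t = 0)
    (heq1 : ∀ t : ℝ, 0 < t →
      iteratedDeriv 4 (fun s => u s 1) t
        - 2 * (‖η‖ : ℂ)^2 * iteratedDeriv 2 (fun s => u s 1) t
        + (‖η‖ : ℂ)^4 * u t 1 + Complex.I * (η 1 : ℂ) * p t = 0)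
    (heq2 : ∀ t : ℝ, 0 < t →
      iteratedDeriv 4 (fun s => u s 2) t
        - 2 * (‖η‖ : ℂ)^2 * iteratedDeriv 2 (fun s => u s 2) t
        + (‖η‖ : ℂ)^4 * u t 2 + deriv p t = 0)
    (hdiv : ∀ t : ℝ, 0 < t →
      deriv (fun s => u s 2) t
        + Complex.I * (η 0 : ℂ) * u t 0 + Complex.I * (η 1 : ℂ) * u t 1 = 0) :
    ∀ t : ℝ, 0 < t → iteratedDeriv 2 p t = (‖η‖ : ℂ)^2 * p t := by
  intro t ht
  set S : Set ℝ := Set.Ioi (0:ℝ) with hSdef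
  have hS : IsOpen S := isOpen_Ioi
  have hUS : UniqueDiffOn ℝ S := hS.uniqueDiffOn
  set f0 : ℝ → ℂ := fun s => u s 0 with hf0
  set f1 : ℝ → ℂ := fun s => u s 1 with hf1
  set f2 : ℝ → ℂ := fun s => u s 2 with hf2
  set r2 : ℂ := (‖η‖ : ℂ)^2 with hr2
  -- norm identity
  have hnorm : r2 = ((η 0 : ℂ))^2 + ((η 1 : ℂ))^2 := by
    have h1 : ‖η‖^2 = (η 0)^2 + (η 1)^2 := by
      rw [EuclideanSpace.norm_eq, Real.sq_sqrt (by positivity)]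
      simp [Fin.sum_univ_two]
    rw [hr2]
    exact_mod_cast h1
  -- contdiff of the divergence combination
  have hg : ContDiffOn ℝ (⊤ : ℕ∞) (fun s => Complex.I * (η 0 : ℂ) * f0 s
      + Complex.I * (η 1 : ℂ) * f1 s) S :=
    (contDiffOn_const.mul (hu 0)).add (contDiffOn_const.mul (hu 1))
  -- key: for k, iteratedDeriv (k+1) f2 t = - (Iη₀ iD k f0 + Iη₁ iD k f1) at points of S
  have key : ∀ k : ℕ, ∀ x ∈ S, iteratedDeriv (k + 1) f2 x =
      -(Complex.I * (η 0 : ℂ) * iteratedDeriv k f0 x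
        + Complex.I * (η 1 : ℂ) * iteratedDeriv k f1 x) := by
    intro k x hx
    have h1 : iteratedDeriv (k + 1) f2 x = iteratedDerivWithin (k + 1) f2 S x :=
      (iDW_open _ hS hx).symm
    rw [h1, iteratedDerivWithin_succ']
    have hEq : Set.EqOn (derivWithin f2 S)
        (fun s => -(Complex.I * (η 0 : ℂ) * f0 s + Complex.I * (η 1 : ℂ) * f1 s)) S := by
      intro y hy
      rw [derivWithin_of_isOpen hS hy]
      have := hdiv y hy
      simp only at this ⊢
      linear_combination this
    rw [iteratedDerivWithin_congr hEq hx, iteratedDerivWithin_fun_neg]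
    have hcf0 : ContDiffOn ℝ k (fun s => Complex.I * (η 0 : ℂ) * f0 s) S :=
      ((hu 0).of_le (by exact_mod_cast le_top)).const_smul (Complex.I * (η 0 : ℂ))
    have hcf1 : ContDiffOn ℝ k (fun s => Complex.I * (η 1 : ℂ) * f1 s) S :=
      ((hu 1).of_le (by exact_mod_cast le_top)).const_smul (Complex.I * (η 1 : ℂ))
    have hA : iteratedDerivWithin k
        (fun s => Complex.I * (η 0 : ℂ) * f0 s + Complex.I * (η 1 : ℂ) * f1 s) S x
        = iteratedDerivWithin k (fun s => Complex.I * (η 0 : ℂ) * f0 s) S x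
          + iteratedDerivWithin k (fun s => Complex.I * (η 1 : ℂ) * f1 s) S x :=
      iteratedDerivWithin_add hx hUS (hcf0 x hx) (hcf1 x hx)
    have hB0 : iteratedDerivWithin k (fun s => Complex.I * (η 0 : ℂ) * f0 s) S x
        = (Complex.I * (η 0 : ℂ)) • iteratedDerivWithin k f0 S x :=
      iteratedDerivWithin_const_smul hx hUS (Complex.I * (η 0 : ℂ)) ((hu 0).of_le (by exact_mod_cast le_top) x hx)
    have hB1 : iteratedDerivWithin k (fun s => Complex.I * (η 1 : ℂ) * f1 s) S x
        = (Complex.I * (η 1 : ℂ)) • iteratedDerivWithin k f1 S x :=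
      iteratedDerivWithin_const_smul hx hUS (Complex.I * (η 1 : ℂ)) ((hu 1).of_le (by exact_mod_cast le_top) x hx)
    rw [hA, hB0, hB1, iDW_open k hS hx, iDW_open k hS hx]
    simp [smul_eq_mul]
  -- differentiate heq2 at t
  have hdiff2 : iteratedDeriv 5 f2 t - 2 * r2 * iteratedDeriv 3 f2 t
      + (‖η‖:ℂ)^4 * deriv f2 t + iteratedDeriv 2 p t = 0 := by
    have hD4 : DifferentiableAt ℝ (iteratedDeriv 4 f2) t := diffAt_iD (hu 2) 4 ht
    have hD2 : DifferentiableAt ℝ (iteratedDeriv 2 f2) t := diffAt_iD (hu 2) 2 ht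
    have hD0 : DifferentiableAt ℝ f2 t := by
      have := diffAt_iD (hu 2) 0 ht; simpa [iteratedDeriv_zero] using this
    have hDp : DifferentiableAt ℝ (deriv p) t := by
      have := diffAt_iD hp 1 ht; simpa [iteratedDeriv_one] using this
    have hzero : (fun x => iteratedDeriv 4 f2 x - 2 * r2 * iteratedDeriv 2 f2 x
        + (‖η‖:ℂ)^4 * f2 x + deriv p x) =ᶠ[nhds t] (fun _ => (0:ℂ)) := by
      filter_upwards [hS.mem_nhds ht] with x hx
      exact heq2 x hx
    have h0 : deriv (fun x => iteratedDeriv 4 f2 x - 2 * r2 * iteratedDeriv 2 f2 x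
        + (‖η‖:ℂ)^4 * f2 x + deriv p x) t = 0 := by
      rw [hzero.deriv_eq]; simp
    rw [deriv_fun_add (((hD4.fun_sub (hD2.const_mul _)).fun_add (hD0.const_mul _))) hDp,
      deriv_fun_add ((hD4.fun_sub (hD2.const_mul _))) (hD0.const_mul _),
      deriv_fun_sub hD4 (hD2.const_mul _), deriv_const_mul _ hD2, deriv_const_mul _ hD0] at h0
    have e5 : deriv (iteratedDeriv 4 f2) t = iteratedDeriv 5 f2 t :=
      (congrFun (iteratedDeriv_succ (n := 4) (f := f2)) t).symm
    have e3 : deriv (iteratedDeriv 2 f2) t = iteratedDeriv 3 f2 t :=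
      (congrFun (iteratedDeriv_succ (n := 2) (f := f2)) t).symm
    have e2 : deriv (deriv p) t = iteratedDeriv 2 p t := by
      have h := (congrFun (iteratedDeriv_succ (n := 1) (f := p)) t).symm
      rwa [iteratedDeriv_one] at h
    rw [e5, e3, e2] at h0
    linear_combination h0
  -- substitute the key identities
  have k4 := key 4 t ht
  have k2 := key 2 t ht
  have k0 := key 0 t ht
  simp only [iteratedDeriv_zero] at k0
  have e0 := heq0 t ht
  have e1 := heq1 t ht
  have hd5 : iteratedDeriv 5 f2 t = iteratedDeriv (4+1) f2 t := rfl
  have hd3 : iteratedDeriv 3 f2 t = iteratedDeriv (2+1) f2 t := rfl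
  have hdf2 : deriv f2 t = iteratedDeriv (0+1) f2 t := by
    rw [show (0+1 : ℕ) = 1 from rfl, iteratedDeriv_one]
  rw [hd5, k4, hd3, k2, hdf2, k0] at hdiff2
  have hI2 : Complex.I * Complex.I = -1 := Complex.I_mul_I
  linear_combination hdiff2 + Complex.I * (η 0 : ℂ) * e0 + Complex.I * (η 1 : ℂ) * e1
    - p t * hnorm - (((η 0:ℂ))^2 + ((η 1:ℂ))^2) * p t * hI2
end

section
/- Let η = (η₁, η₂) ∈ ℝ² with η ≠ 0, write r = |η|, let a, b ∈ ℂ³, a₀ ∈ ℂ, and let v : ℝ → ℂ³ be given by v(t) = (e^{−rt}/(8r³)) · (−i η₁ r t², −i η₂ r t², r² t² − 2 r t − 2). Define u(t) = e^{−rt}(a + t b) + a₀ v(t). Assume the Dirichlet conditions a₁ = a₂ = 0 and a₃ = a₀/(4r³) (i.e. u(0) = 0). Then for j = 1,2 one has uⱼ''(0) − i ηⱼ u₃'(0) = −(2 r bⱼ + i ηⱼ b₃); in particular the parameter a₀ cancels, and the two principal wall–eddy boundary conditions uⱼ''(0) − i ηⱼ u₃'(0) = 0 (j = 1,2) are equivalent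 to 2 r bⱼ + i ηⱼ b₃ = 0 for j = 1,2. -/
/-- The particular solution
`v(t) = (e^{−rt}/(8r³)) · (−iη₁rt², −iη₂rt², r²t² − 2rt − 2)` with `r = |η|`. -/
noncomputable def vpart (η : EuclideanSpace ℝ (Fin 2)) (t : ℝ) : Fin 3 → ℂ :=
  (Complex.exp (-(‖η‖ : ℂ) * (t : ℂ)) / (8 * (‖η‖ : ℂ)^3)) •
    ![-Complex.I * (η 0 : ℂ) * (‖η‖ : ℂ) * (t : ℂ)^2,
      -Complex.I * (η 1 : ℂ) * (‖η‖ : ℂ) * (t : ℂ)^2,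
      (‖η‖ : ℂ)^2 * (t : ℂ)^2 - 2 * (‖η‖ : ℂ) * (t : ℂ) - 2]

/-- The general decaying solution `u(t) = e^{−rt}(a + t b) + a₀ v(t)`. -/
noncomputable def usol (η : EuclideanSpace ℝ (Fin 2)) (a b : Fin 3 → ℂ) (a₀ : ℂ)
    (t : ℝ) : Fin 3 → ℂ :=
  fun i => Complex.exp (-(‖η‖ : ℂ) * (t : ℂ)) * (a i + (t : ℂ) * b i) + a₀ * vpart η t i

/-! Every component of `u` has the form `t ↦ e^{−rt}(c₀ + c₁t + c₂t²)`, a class closed under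
differentiation, so `u'(0) = c₁ − rc₀` and `u''(0) = 2c₂ − 2rc₁ + r²c₀`. The condition `u(0) = 0`
makes every `c₀` vanish, and the `a₀`-contributions to `uⱼ''(0)` and to `iηⱼ u₃'(0)` are both
`−a₀ iηⱼ/(4r²)`, so they cancel. -/

open Complex

theorem hasDerivAt_cexp_mul_quadratic (r c₀ c₁ c₂ : ℂ) (t : ℝ) :
    HasDerivAt (fun t : ℝ => exp (-r * t) * (c₀ + c₁ * t + c₂ * t ^ 2))
      (exp (-r * t) * ((c₁ - r * c₀) + (2 * c₂ - r * c₁) * t + -(r * c₂) * t ^ 2)) t := by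
  have hexp : HasDerivAt (fun z : ℂ => exp (-r * z)) (exp (-r * t) * -r) t :=
    ((hasDerivAt_id (t : ℂ)).const_mul (-r)).cexp.congr_deriv (by simp)
  have hpoly : HasDerivAt (fun z : ℂ => c₀ + c₁ * z + c₂ * z ^ 2) (c₁ + c₂ * (2 * t)) t :=
    ((((hasDerivAt_id (t : ℂ)).const_mul c₁).const_add c₀).add
      ((hasDerivAt_pow 2 (t : ℂ)).const_mul c₂)).congr_deriv (by simp)
  exact ((hexp.mul hpoly).comp_ofReal).congr_deriv (by ring)

theorem deriv_cexp_mul_quadratic (r c₀ c₁ c₂ : ℂ) :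
    deriv (fun t : ℝ => exp (-r * t) * (c₀ + c₁ * t + c₂ * t ^ 2)) =
      fun t : ℝ => exp (-r * t) * ((c₁ - r * c₀) + (2 * c₂ - r * c₁) * t + -(r * c₂) * t ^ 2) :=
  funext fun t => (hasDerivAt_cexp_mul_quadratic r c₀ c₁ c₂ t).deriv

theorem deriv_cexp_mul_quadratic_zero (r c₀ c₁ c₂ : ℂ) :
    deriv (fun t : ℝ => exp (-r * t) * (c₀ + c₁ * t + c₂ * t ^ 2)) 0 = c₁ - r * c₀ := by
  rw [deriv_cexp_mul_quadratic]
  simp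

theorem iteratedDeriv_two_cexp_mul_quadratic_zero (r c₀ c₁ c₂ : ℂ) :
    iteratedDeriv 2 (fun t : ℝ => exp (-r * t) * (c₀ + c₁ * t + c₂ * t ^ 2)) 0 =
      2 * c₂ - 2 * r * c₁ + r ^ 2 * c₀ := by
  rw [iteratedDeriv_succ, iteratedDeriv_one, deriv_cexp_mul_quadratic,
    deriv_cexp_mul_quadratic_zero]
  ring

section

variable {η : EuclideanSpace ℝ (Fin 2)} (a b : Fin 3 → ℂ) (a₀ : ℂ)

theorem vpart_castSucc (j : Fin 2) (t : ℝ) :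
    vpart η t j.castSucc =
      exp (-‖η‖ * t) / (8 * ‖η‖ ^ 3) * (-I * η j * ‖η‖ * t ^ 2) := by
  fin_cases j <;> rfl

theorem vpart_two (t : ℝ) :
    vpart η t 2 =
      exp (-‖η‖ * t) / (8 * ‖η‖ ^ 3) * (‖η‖ ^ 2 * t ^ 2 - 2 * ‖η‖ * t - 2) :=
  rfl

theorem usol_castSucc_eq (hr : (‖η‖ : ℂ) ≠ 0) (j : Fin 2) :
    (fun t => usol η a b a₀ t j.castSucc) = fun t : ℝ => exp (-‖η‖ * t) *
      (a j.castSucc + b j.castSucc * t + -(a₀ * I * η j) / (8 * ‖η‖ ^ 2) * t ^ 2) := by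
  funext t
  rw [usol, vpart_castSucc]
  field_simp

theorem usol_two_eq (hr : (‖η‖ : ℂ) ≠ 0) :
    (fun t => usol η a b a₀ t 2) = fun t : ℝ => exp (-‖η‖ * t) *
      ((a 2 - a₀ / (4 * ‖η‖ ^ 3)) + (b 2 - a₀ / (4 * ‖η‖ ^ 2)) * t + a₀ / (8 * ‖η‖) * t ^ 2) := by
  funext t
  rw [usol, vpart_two]
  field_simp
  ring

theorem iteratedDeriv_two_usol_sub_deriv_usol_two (hη : η ≠ 0)
    (ha : ∀ j : Fin 2, a j.castSucc = 0) (ha2 : a 2 = a₀ / (4 * (‖η‖ : ℂ) ^ 3)) (j : Fin 2) :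
    iteratedDeriv 2 (fun t => usol η a b a₀ t j.castSucc) 0
        - I * η j * deriv (fun t => usol η a b a₀ t 2) 0
      = -(2 * ‖η‖ * b j.castSucc + I * η j * b 2) := by
  have hr : (‖η‖ : ℂ) ≠ 0 := by exact_mod_cast norm_ne_zero_iff.mpr hη
  rw [usol_castSucc_eq a b a₀ hr, usol_two_eq a b a₀ hr, iteratedDeriv_two_cexp_mul_quadratic_zero,
    deriv_cexp_mul_quadratic_zero, ha, ha2]
  field_simp
  ring

end

/-- With the Dirichlet conditions `a₁ = a₂ = 0`, `a₃ = a₀/(4r³)` (i.e. `u(0) = 0`),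
one has `uⱼ''(0) − iηⱼ u₃'(0) = −(2rbⱼ + iηⱼb₃)` for `j = 1,2`; in particular the
parameter `a₀` cancels, and the two principal wall–eddy boundary conditions
`uⱼ''(0) − iηⱼu₃'(0) = 0` (`j = 1,2`) are equivalent to `2rbⱼ + iηⱼb₃ = 0` for
`j = 1,2` (indices 0-based). -/
theorem stmt16 (η : EuclideanSpace ℝ (Fin 2)) (hη : η ≠ 0)
    (a b : Fin 3 → ℂ) (a₀ : ℂ)
    (ha0 : a 0 = 0) (ha1 : a 1 = 0) (ha2 : a 2 = a₀ / (4 * (‖η‖ : ℂ)^3)) :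
    (iteratedDeriv 2 (fun t => usol η a b a₀ t 0) 0
        - Complex.I * (η 0 : ℂ) * deriv (fun t => usol η a b a₀ t 2) 0
      = -(2 * (‖η‖ : ℂ) * b 0 + Complex.I * (η 0 : ℂ) * b 2)) ∧
    (iteratedDeriv 2 (fun t => usol η a b a₀ t 1) 0
        - Complex.I * (η 1 : ℂ) * deriv (fun t => usol η a b a₀ t 2) 0
      = -(2 * (‖η‖ : ℂ) * b 1 + Complex.I * (η 1 : ℂ) * b 2)) ∧
    ((iteratedDeriv 2 (fun t => usol η a b a₀ t 0) 0
        - Complex.I * (η 0 : ℂ) * deriv (fun t => usol η a b a₀ t 2) 0 = 0 ∧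
      iteratedDeriv 2 (fun t => usol η a b a₀ t 1) 0
        - Complex.I * (η 1 : ℂ) * deriv (fun t => usol η a b a₀ t 2) 0 = 0)
      ↔ (2 * (‖η‖ : ℂ) * b 0 + Complex.I * (η 0 : ℂ) * b 2 = 0 ∧
         2 * (‖η‖ : ℂ) * b 1 + Complex.I * (η 1 : ℂ) * b 2 = 0)) := by
  have ha : ∀ j : Fin 2, a j.castSucc = 0 := Fin.forall_fin_two.mpr ⟨ha0, ha1⟩
  have h0 := iteratedDeriv_two_usol_sub_deriv_usol_two a b a₀ hη ha ha2 0
  have h1 := iteratedDeriv_two_usol_sub_deriv_usol_two a b a₀ hη ha ha2 1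
  simp only [Fin.castSucc_zero', Fin.reduceCastSucc] at h0 h1
  refine ⟨h0, h1, ?_⟩
  rw [h0, h1, neg_eq_zero, neg_eq_zero]
end

section
/- Let η = (η₁, η₂) ∈ ℝ² with η ≠ 0 and write r = |η|. Suppose a = (a₁,a₂,a₃), b = (b₁,b₂,b₃) ∈ ℂ³ and a₀ ∈ ℂ satisfy: (i) 2r b₁ + i η₁ b₃ = 0 and 2r b₂ + i η₂ b₃ = 0; (ii) b₃ = i(η₁ b₁ + η₂ b₂)/r; (iii) a₁ = a₂ = 0 and a₃ = a₀/(4r³); and (iv) a₃ = (i η₁ a₁ + i η₂ a₂ + b₃)/r. Then a = 0, b = 0, and a₀ = 0. -/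
/-! Writing `r = |η|`, condition (i) expresses `b₁, b₂` through `b₃`; substituting into (ii) and
using `η₁² + η₂² = r²` gives `2 r² b₃ = r² b₃`, so `b₃ = 0` and then `b₁ = b₂ = 0`. With `b = 0`,
(iii) and (iv) force `a₃ = 0` and hence `a₀ = 4 r³ a₃ = 0`. -/

open Complex

theorem EuclideanSpace.norm_sq_eq_fin_two (η : EuclideanSpace ℝ (Fin 2)) :
    ((‖η‖ : ℂ)) ^ 2 = (η 0 : ℂ) ^ 2 + (η 1 : ℂ) ^ 2 := by
  exact_mod_cast (EuclideanSpace.real_norm_sq_eq η).trans (Fin.sum_univ_two _)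

theorem eq_zero_of_wall_eddy_conditions {r x y b₀ b₁ b₂ : ℂ} (hr : r ≠ 0)
    (hxy : r ^ 2 = x ^ 2 + y ^ 2)
    (h₀ : 2 * r * b₀ + I * x * b₂ = 0) (h₁ : 2 * r * b₁ + I * y * b₂ = 0)
    (h₂ : b₂ = I * (x * b₀ + y * b₁) / r) :
    b₀ = 0 ∧ b₁ = 0 ∧ b₂ = 0 := by
  have h₂' : b₂ * r = I * (x * b₀ + y * b₁) := by rw [h₂]; field_simp
  have hb₂ : b₂ = 0 := by
    have : r ^ 2 * b₂ = 0 := by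
      linear_combination 2 * r * h₂' + I * x * h₀ + I * y * h₁ - b₂ * hxy
        - b₂ * (x ^ 2 + y ^ 2) * I_sq
    simpa [hr] using this
  have hb₀ : 2 * r * b₀ = 0 := by linear_combination h₀ - I * x * hb₂
  have hb₁ : 2 * r * b₁ = 0 := by linear_combination h₁ - I * y * hb₂
  exact ⟨by simpa [hr] using hb₀, by simpa [hr] using hb₁, hb₂⟩

/-- Let `η ∈ ℝ²` be nonzero, `r = |η|`, `a, b ∈ ℂ³`, `a₀ ∈ ℂ`.  If
(i) `2rb₁ + iη₁b₃ = 0` and `2rb₂ + iη₂b₃ = 0`,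
(ii) `b₃ = i(η₁b₁ + η₂b₂)/r`,
(iii) `a₁ = a₂ = 0` and `a₃ = a₀/(4r³)`, and
(iv) `a₃ = (iη₁a₁ + iη₂a₂ + b₃)/r`,
then `a = 0`, `b = 0`, and `a₀ = 0` (indices 0-based). -/
theorem stmt17 (η : EuclideanSpace ℝ (Fin 2)) (hη : η ≠ 0)
    (a b : Fin 3 → ℂ) (a₀ : ℂ)
    (h1a : 2 * (‖η‖ : ℂ) * b 0 + Complex.I * (η 0 : ℂ) * b 2 = 0)
    (h1b : 2 * (‖η‖ : ℂ) * b 1 + Complex.I * (η 1 : ℂ) * b 2 = 0)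
    (h2 : b 2 = Complex.I * ((η 0 : ℂ) * b 0 + (η 1 : ℂ) * b 1) / (‖η‖ : ℂ))
    (h3a : a 0 = 0) (h3b : a 1 = 0) (h3c : a 2 = a₀ / (4 * (‖η‖ : ℂ)^3))
    (h4 : a 2 = (Complex.I * (η 0 : ℂ) * a 0 + Complex.I * (η 1 : ℂ) * a 1 + b 2) / (‖η‖ : ℂ)) :
    a = 0 ∧ b = 0 ∧ a₀ = 0 := by
  have hr : (‖η‖ : ℂ) ≠ 0 := by exact_mod_cast norm_ne_zero_iff.mpr hη
  obtain ⟨hb₀, hb₁, hb₂⟩ :=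
    eq_zero_of_wall_eddy_conditions hr η.norm_sq_eq_fin_two h1a h1b h2
  have ha₂ : a 2 = 0 := by simpa [h3a, h3b, hb₂] using h4
  have ha₀ : a₀ = 0 := by simpa [ha₂, hr] using h3c.symm
  refine ⟨?_, ?_, ha₀⟩ <;> ext i <;> fin_cases i <;> assumption
end
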